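/- arXiv:0811.2325 — 2 statements merged into one kernel-verified Lean document; each statement's English description precedes it below -/
import Mathlib

section
/- The quadratic map τ : P²(C) ⇢ P²(C), (x₀:x₁:x₂) ↦ (x₀² : x₀x₁ : x₁² − x₀x₂), is a birational involution (τ∘τ = id as rational maps), its unique indeterminacy point is (0:0:1), and its unique contracted line is x₀ = 0. -/
open MvPolynomial

/-- Homogeneous-coordinate polynomials: polynomials in three variables over `ℂ`. -/
abbrev P3 : Type := MvPolynomial (Fin 3) ℂ

/-- Vectors in `ℂ³` (homogeneous coordinates on `ℙ²(ℂ)`). -/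
abbrev V3 : Type := Fin 3 → ℂ

/-- Evaluation of a polynomial triple at a point of `ℂ³`. -/
noncomputable def evalT (F : Fin 3 → P3) (x : V3) : V3 := fun i => eval x (F i)

/-- Two vectors of `ℂ³` represent the same point of `ℙ²(ℂ)`. -/
def ProjRel (u v : V3) : Prop := ∃ c : ℂ, c ≠ 0 ∧ v = c • u

/-- The three components have no nonconstant common factor. -/
def NoCommonFactor (F : Fin 3 → P3) : Prop := ∀ p : P3, (∀ i, p ∣ F i) → IsUnit p

/-- The Jacobian determinant `det (∂Fᵢ/∂xⱼ)` of a polynomial triple. -/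
noncomputable def detJac (F : Fin 3 → P3) : P3 :=
  Matrix.det (Matrix.of fun i j => pderiv j (F i))

/-- `G` is a rational inverse of `F`: both composites are (a nonzero multiple of) the
identity as rational maps of `ℙ²(ℂ)`. -/
def InverseOf (G F : Fin 3 → P3) : Prop :=
  (∃ h : P3, h ≠ 0 ∧ ∀ i, bind₁ F (G i) = h * X i) ∧
  (∃ h : P3, h ≠ 0 ∧ ∀ i, bind₁ G (F i) = h * X i)

/-- The rational map of `ℙ²(ℂ)` induced by `F` is birational: it admits a rational
inverse (given by a triple of homogeneous polynomials of some common degree). -/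
def IsBirational (F : Fin 3 → P3) : Prop :=
  ∃ (m : ℕ) (G : Fin 3 → P3), (∀ i, (G i).IsHomogeneous m) ∧ InverseOf G F

/-- `F` contracts the curve `{P = 0}`: the image under `F` of the curve, away from the
indeterminacy points of `F`, is a single point of `ℙ²(ℂ)`. -/
def Contracts (F : Fin 3 → P3) (P : P3) : Prop :=
  ∃ p : V3, p ≠ 0 ∧ ∀ x : V3, x ≠ 0 → eval x P = 0 → evalT F x ≠ 0 →
    ProjRel p (evalT F x)

/-- The quadratic map `τ : (x₀:x₁:x₂) ↦ (x₀² : x₀x₁ : x₁² − x₀x₂)`. -/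
noncomputable def tauC : Fin 3 → P3 := ![X 0 ^ 2, X 0 * X 1, X 1 ^ 2 - X 0 * X 2]

/-! Since `τ ∘ τ = x₀³ · id`, `τ` is a birational involution, and since `τ(x)₀ = x₀²` it is
injective on points of `ℙ²` off the line `x₀ = 0`. So if `τ` contracts an irreducible curve
`P = 0` to a point `p`, every point of the curve off `x₀ = 0` is `q = τ(p)`. By the
Nullstellensatz `P` then divides `x₀ · L` for a line `L` through `q`, hence (by degree) is
associated to `x₀` or to `L`, and the latter is impossible because `L` has points other than `q`
off `x₀ = 0`. -/

namespace MvPolynomial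

variable {σ K : Type*} [Field K]

theorem associated_of_dvd_of_totalDegree_le {P L : MvPolynomial σ K} (hdvd : P ∣ L) (hL : L ≠ 0)
    (hdeg : L.totalDegree ≤ P.totalDegree) : Associated P L := by
  obtain ⟨u, rfl⟩ := hdvd
  have hu : u ≠ 0 := right_ne_zero_of_mul hL
  rw [totalDegree_mul_of_isDomain (left_ne_zero_of_mul hL) hu] at hdeg
  rw [totalDegree_eq_zero_iff_eq_C.1 (by omega : u.totalDegree = 0)] at hu ⊢
  exact associated_mul_unit_right _ _ ((isUnit_iff_ne_zero.2 (by simpa using hu)).map C)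

theorem _root_.Prime.dvd_of_forall_eval_eq_zero [IsAlgClosed K] [Finite σ]
    {P F : MvPolynomial σ K} (hP : Prime P) (hF : ∀ x, eval x P = 0 → eval x F = 0) : P ∣ F := by
  have : (Ideal.span {P}).IsPrime := (Ideal.span_singleton_prime hP.ne_zero).2 hP
  rw [← Ideal.mem_span_singleton, ← Ideal.IsPrime.radical this,
    ← vanishingIdeal_zeroLocus_eq_radical (K := K)]
  exact fun x hx => hF x (hx P (Ideal.mem_span_singleton_self P))

end MvPolynomial

open MvPolynomial

theorem projRel_single_one_iff {x : V3} (hx : x ≠ 0) (i : Fin 3) :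
    ProjRel (Pi.single i 1) x ↔ ∀ j ≠ i, x j = 0 := by
  constructor
  · rintro ⟨c, -, rfl⟩ j hj
    simp [hj]
  · intro h
    have hxi : x = Pi.single i (x i) := by
      funext j
      by_cases hj : j = i
      · subst hj; simp
      · simp [hj, h j hj]
    refine ⟨x i, fun h0 => hx ?_, ?_⟩
    · rw [hxi, h0, Pi.single_zero]
    · rw [← Pi.single_smul, smul_eq_mul, mul_one, ← hxi]

theorem bind₁_tauC_tauC (i : Fin 3) : bind₁ tauC (tauC i) = X 0 ^ 3 * X i := by
  fin_cases i <;> simp [tauC] <;> ring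

theorem evalT_tauC_evalT_tauC (x : V3) : evalT tauC (evalT tauC x) = x 0 ^ 3 • x := by
  funext i
  show eval (fun j => eval x (tauC j)) (tauC i) = x 0 ^ 3 * x i
  simpa [← aeval_eq_eval, aeval_bind₁] using congrArg (eval x) (bind₁_tauC_tauC i)

theorem evalT_tauC_zero (x : V3) : evalT tauC x 0 = x 0 ^ 2 := by
  simp [evalT, tauC]

theorem evalT_tauC_smul (c : ℂ) (x : V3) : evalT tauC (c • x) = c ^ 2 • evalT tauC x := by
  funext i
  fin_cases i <;> simp [evalT, tauC] <;> ring

theorem evalT_tauC_of_zero {x : V3} (hx : x 0 = 0) :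
    evalT tauC x = x 1 ^ 2 • Pi.single 2 1 := by
  funext i
  fin_cases i <;> simp [evalT, tauC, hx]

theorem forall_eval_tauC_eq_zero_iff (x : V3) :
    (∀ i, eval x (tauC i) = 0) ↔ ∀ j ≠ 2, x j = 0 := by
  simp +contextual [Fin.forall_fin_succ, tauC]

theorem projRel_evalT_tauC_of_projRel {p x : V3} (hx : x 0 ≠ 0)
    (h : ProjRel p (evalT tauC x)) : ProjRel (evalT tauC p) x := by
  obtain ⟨c, hc, hcx⟩ := h
  have hτ : x 0 ^ 3 • x = c ^ 2 • evalT tauC p := by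
    rw [← evalT_tauC_evalT_tauC, hcx, evalT_tauC_smul]
  refine ⟨c ^ 2 / x 0 ^ 3, by simp [hc, hx], ?_⟩
  rw [div_eq_inv_mul, mul_smul, ← hτ, smul_smul, inv_mul_cancel₀ (pow_ne_zero _ hx), one_smul]

theorem contracts_tauC_X_zero : Contracts tauC (X 0) := by
  refine ⟨Pi.single 2 1, by simp, fun x _ hx hτ => ?_⟩
  rw [eval_X] at hx
  rw [evalT_tauC_of_zero hx] at hτ ⊢
  exact ⟨x 1 ^ 2, left_ne_zero_of_smul hτ, rfl⟩

theorem associated_X_zero_of_forall_projRel {P : P3} (hP : Irreducible P) {d : ℕ} (hd : 1 ≤ d)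
    (hPd : P.IsHomogeneous d) (q : V3) (hq : ∀ x, eval x P = 0 → x 0 ≠ 0 → ProjRel q x) :
    Associated P (X 0) := by
  have hline : ∀ L : P3, L.IsHomogeneous 1 → L ≠ 0 → P ∣ L → Associated P L :=
    fun L hL hL0 hdvd => associated_of_dvd_of_totalDegree_le hdvd hL0 <| by
      rw [hL.totalDegree hL0, hPd.totalDegree hP.ne_zero]; exact hd
  have hX : (X 0 : P3).IsHomogeneous 1 := isHomogeneous_X _ _
  by_cases hq0 : q 0 = 0
  · refine hline _ hX (X_ne_zero _) (hP.prime.dvd_of_forall_eval_eq_zero fun x hx => ?_)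
    by_contra hx0
    obtain ⟨c, -, rfl⟩ := hq x hx (by simpa using hx0)
    simp [hq0] at hx0
  -- the line through `[q]` and `(0:0:1)`
  set L : P3 := C (q 0) * X 1 - C (q 1) * X 0
  have hL : L.IsHomogeneous 1 := ((isHomogeneous_X _ _).C_mul _).sub (hX.C_mul _)
  have hL0 : L ≠ 0 := fun h => hq0 (by simpa [L] using congrArg (eval (Pi.single 1 1)) h)
  have hXL : P ∣ X 0 * L := hP.prime.dvd_of_forall_eval_eq_zero fun x hx => by
    by_cases hx0 : x 0 = 0
    · simp [hx0]
    obtain ⟨c, -, rfl⟩ := hq x hx hx0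
    simp only [L, eval_mul, eval_sub, eval_C, eval_X, Pi.smul_apply, smul_eq_mul]
    ring
  refine hline _ hX (X_ne_zero _) ((hP.prime.dvd_or_dvd hXL).resolve_right fun hPL => ?_)
  obtain ⟨u, hu⟩ := (hline L hL hL0 hPL).symm.dvd
  set y : V3 := ![q 0, q 1, q 2 + 1]
  have hy : eval y P = 0 := by simp [hu, L, y, mul_comm]
  obtain ⟨c, -, hc⟩ := hq y hy (by simpa [y] using hq0)
  have h0 := congrFun hc 0
  have h2 := congrFun hc 2
  simp only [y, Pi.smul_apply, smul_eq_mul, Matrix.cons_val] at h0 h2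
  have hc1 : c = 1 := mul_right_cancel₀ hq0 (by linear_combination -h0)
  exact one_ne_zero (by linear_combination h2 + q 2 * hc1 : (1 : ℂ) = 0)

/-- `τ` is a birational involution (`τ ∘ τ = id` as rational maps),
its unique indeterminacy point is `(0:0:1)`, and its unique contracted curve is the
line `x₀ = 0`. -/
theorem tau_involution_props :
    (∃ h : P3, h ≠ 0 ∧ ∀ i, bind₁ tauC (tauC i) = h * X i) ∧
    (∀ x : V3, x ≠ 0 →
      ((∀ i, eval x (tauC i) = 0) ↔ ProjRel (Pi.single 2 1) x)) ∧
    Contracts tauC (X 0) ∧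
    (∀ P : P3, Irreducible P → (∃ d : ℕ, 1 ≤ d ∧ P.IsHomogeneous d) →
      Contracts tauC P → Associated P (X 0)) := by
  refine ⟨⟨X 0 ^ 3, pow_ne_zero _ (X_ne_zero _), bind₁_tauC_tauC⟩,
    fun x hx => by rw [forall_eval_tauC_eq_zero_iff, projRel_single_one_iff hx],
    contracts_tauC_X_zero, ?_⟩
  rintro P hP ⟨d, hd, hPd⟩ ⟨p, -, hp⟩
  refine associated_X_zero_of_forall_projRel hP hd hPd (evalT tauC p) fun x hx hx0 => ?_
  have hτx : evalT tauC x ≠ 0 := fun h => hx0 <| by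
    simpa [evalT_tauC_zero] using congrFun h 0
  exact projRel_evalT_tauC_of_projRel hx0 (hp x (fun h => hx0 (by simp [h])) hx hτx)
end

section
/- Any polynomial automorphism g of C² of degree 2 commuting with the elementary automorphism f = (αx₀ + β + x₁², a x₁ + b), where αa ≠ 0, preserves the fibration x₁ = constant (i.e., the second component of g depends only on x₁). -/
open MvPolynomial

/-- Polynomials in two variables over `ℂ` (the affine plane `ℂ²`). -/
abbrev P2 : Type := MvPolynomial (Fin 2) ℂ

/-- `(f, g)` is a pair of mutually inverse polynomial self-maps of `ℂ²`, i.e. `f` is a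
polynomial automorphism of `ℂ²` with polynomial inverse `g`. -/
def PolyAutPair (f g : Fin 2 → P2) : Prop :=
  (∀ i, bind₁ g (f i) = X i) ∧ (∀ i, bind₁ f (g i) = X i)

/-!
Evaluating `g₁ ∘ f = a g₁ + b` and `g₀ ∘ f = α g₀ + β + g₁²` at points of `ℂ²` turns the
commutation into identities between the six coefficients of each quadratic component.
Finite differences in `x₁` read off single coefficients. Those of `x₁⁴` and `x₁³` kill the
`x₀²` and `x₀x₁` terms of `g₁`. A nonzero `x₀`-coefficient of `g₁` would then force `α = a`,
and comparing the `x₁²`, `x₁⁴` and `x₀x₁²` coefficients shows that the `x₁²`-coefficient of `g₁`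
vanishes, hence so does its `x₀`-coefficient.
-/

lemma eval_bind₁ {σ τ R : Type*} [CommSemiring R] (x : τ → R) (f : σ → MvPolynomial τ R)
    (p : MvPolynomial σ R) : eval x (bind₁ f p) = eval (fun i => eval x (f i)) p := by
  rw [← coe_aeval_eq_eval, AlgHom.coe_toRingHom, aeval_bind₁]
  rfl

noncomputable def mon (i j : ℕ) : Fin 2 →₀ ℕ := Finsupp.single 0 i + Finsupp.single 1 j

@[simp] lemma mon_apply_zero (i j : ℕ) : mon i j 0 = i := by simp [mon]

@[simp] lemma mon_apply_one (i j : ℕ) : mon i j 1 = j := by simp [mon]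

lemma eq_mon (m : Fin 2 →₀ ℕ) : m = mon (m 0) (m 1) := by
  ext i; fin_cases i <;> simp

@[simp] lemma mon_inj {i j k l : ℕ} : mon i j = mon k l ↔ i = k ∧ j = l := by
  refine ⟨fun h => ⟨by simpa using congrArg (· 0) h, by simpa using congrArg (· 1) h⟩, ?_⟩
  rintro ⟨rfl, rfl⟩
  rfl

lemma apply_zero_add_apply_one_le_totalDegree {p : P2} {m : Fin 2 →₀ ℕ} (hm : m ∈ p.support) :
    m 0 + m 1 ≤ p.totalDegree := by
  simpa [Finsupp.sum_fintype] using le_totalDegree hm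

lemma coeff_mon_eq_zero_of_two_lt {p : P2} (hp : p.totalDegree ≤ 2) {i j : ℕ} (hij : 2 < i + j) :
    coeff (mon i j) p = 0 :=
  notMem_support_iff.mp fun hm => by
    have := (apply_zero_add_apply_one_le_totalDegree hm).trans hp
    simp only [mon_apply_zero, mon_apply_one] at this
    omega

lemma eq_sum_monomial_of_totalDegree_le_two {p : P2} (hp : p.totalDegree ≤ 2) :
    p = monomial (mon 0 0) (coeff (mon 0 0) p) + monomial (mon 1 0) (coeff (mon 1 0) p)
      + monomial (mon 0 1) (coeff (mon 0 1) p) + monomial (mon 2 0) (coeff (mon 2 0) p)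
      + monomial (mon 1 1) (coeff (mon 1 1) p) + monomial (mon 0 2) (coeff (mon 0 2) p) := by
  ext m
  rw [eq_mon m]
  generalize m 0 = i, m 1 = j
  simp only [coeff_add, coeff_monomial, mon_inj]
  by_cases hij : i + j ≤ 2
  · have hi : i ≤ 2 := by omega
    have hj : j ≤ 2 := by omega
    interval_cases i <;> interval_cases j <;> simp_all
  · rw [coeff_mon_eq_zero_of_two_lt hp (by omega)]
    grind

lemma eval_monomial_mon (x : Fin 2 → ℂ) (i j : ℕ) (r : ℂ) :
    eval x (monomial (mon i j) r) = r * x 0 ^ i * x 1 ^ j := by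
  rw [eval_monomial, Finsupp.prod_fintype _ _ (fun _ => pow_zero _), Fin.prod_univ_two,
    mon_apply_zero, mon_apply_one, mul_assoc]

def quadratic (c : ℕ → ℕ → ℂ) (x y : ℂ) : ℂ :=
  c 0 0 + c 1 0 * x + c 0 1 * y + c 2 0 * x ^ 2 + c 1 1 * x * y + c 0 2 * y ^ 2

lemma eval_eq_quadratic {p : P2} (hp : p.totalDegree ≤ 2) (x : Fin 2 → ℂ) :
    eval x p = quadratic (fun i j => coeff (mon i j) p) (x 0) (x 1) := by
  conv_lhs => rw [eq_sum_monomial_of_totalDegree_le_two hp]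
  simp only [map_add, eval_monomial_mon, quadratic]
  ring

lemma vars_subset_singleton_one_of_coeff_eq_zero {p : P2} (hp : p.totalDegree ≤ 2)
    (h10 : coeff (mon 1 0) p = 0) (h20 : coeff (mon 2 0) p = 0) (h11 : coeff (mon 1 1) p = 0) :
    p.vars ⊆ {1} := by
  intro k hk
  obtain ⟨m, hm, hkm⟩ := (mem_vars_iff_mem_support k).1 hk
  rw [Finset.mem_singleton]
  by_contra hk1
  obtain rfl : k = 0 := by omega
  have hdeg := (apply_zero_add_apply_one_le_totalDegree hm).trans hp
  have hm0 : m 0 ≠ 0 := Finsupp.mem_support_iff.1 hkm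
  rw [mem_support_iff, eq_mon m] at hm
  generalize m 0 = i, m 1 = j at *
  have hi : i ≤ 2 := by omega
  have hj : j ≤ 2 := by omega
  interval_cases i <;> interval_cases j <;> simp_all

section Coefficients

variable {α β a b : ℂ} {c d : ℕ → ℕ → ℂ}

/- Finite differences in `y`: the weights `1, -4, 6, -4, 1` at `y = 2, 1, 0, -1, -2` annihilate
every power of `y` below the fourth, and `1, -2, 2, -1` at `y = 2, 1, -1, -2` every power of
degree at most four but the third. -/

lemma coeff_two_zero_eq_zero_of_semiconj
    (h1 : ∀ x y, quadratic c (α * x + β + y ^ 2) (a * y + b) = a * quadratic c x y + b) :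
    c 2 0 = 0 := by
  simp only [quadratic] at h1
  linear_combination (h1 0 2 - 4 * h1 0 1 + 6 * h1 0 0 - 4 * h1 0 (-1) + h1 0 (-2)) / 24

lemma coeff_one_one_eq_zero_of_semiconj (ha : a ≠ 0)
    (h1 : ∀ x y, quadratic c (α * x + β + y ^ 2) (a * y + b) = a * quadratic c x y + b) :
    c 1 1 = 0 := by
  simp only [quadratic] at h1
  refine (mul_eq_zero.1 ?_).resolve_left ha
  linear_combination (h1 0 2 - 2 * h1 0 1 + 2 * h1 0 (-1) - h1 0 (-2)) / 12

lemma coeff_one_zero_relations_of_semiconj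
    (h1 : ∀ x y, quadratic c (α * x + β + y ^ 2) (a * y + b) = a * quadratic c x y + b)
    (h20 : c 2 0 = 0) (h11 : c 1 1 = 0) :
    c 1 0 * α = c 1 0 * a ∧ c 1 0 = (a - a ^ 2) * c 0 2 := by
  simp only [quadratic, h20, h11, zero_mul, add_zero] at h1
  constructor
  · linear_combination h1 1 0 - h1 0 0
  · linear_combination (h1 0 1 + h1 0 (-1) - 2 * h1 0 0) / 2

lemma coeff_two_zero_relations_of_comp_eq
    (h0 : ∀ x y, quadratic d (α * x + β + y ^ 2) (a * y + b) =
      α * quadratic d x y + β + quadratic c x y ^ 2)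
    (h20 : c 2 0 = 0) (h11 : c 1 1 = 0) :
    d 2 0 = c 0 2 ^ 2 ∧ α * d 2 0 = c 1 0 * c 0 2 := by
  simp only [quadratic, h20, h11, zero_mul, add_zero] at h0
  constructor
  · linear_combination (h0 0 2 - 4 * h0 0 1 + 6 * h0 0 0 - 4 * h0 0 (-1) + h0 0 (-2)) / 24
  · linear_combination (h0 1 1 + h0 1 (-1) - 2 * h0 1 0 - h0 0 1 - h0 0 (-1) + 2 * h0 0 0) / 4

theorem coeffs_eq_zero_of_commute_elementary (ha : a ≠ 0)
    (h1 : ∀ x y, quadratic c (α * x + β + y ^ 2) (a * y + b) = a * quadratic c x y + b)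
    (h0 : ∀ x y, quadratic d (α * x + β + y ^ 2) (a * y + b) =
      α * quadratic d x y + β + quadratic c x y ^ 2) :
    c 1 0 = 0 ∧ c 2 0 = 0 ∧ c 1 1 = 0 := by
  have h20 := coeff_two_zero_eq_zero_of_semiconj h1
  have h11 := coeff_one_one_eq_zero_of_semiconj ha h1
  obtain ⟨hα, hc10⟩ := coeff_one_zero_relations_of_semiconj h1 h20 h11
  obtain ⟨hd20, hαd20⟩ := coeff_two_zero_relations_of_comp_eq h0 h20 h11
  refine ⟨?_, h20, h11⟩
  by_contra hne
  have hαa : α = a := mul_left_cancel₀ hne hα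
  have hsq : a ^ 2 * c 0 2 ^ 2 = 0 := by
    linear_combination c 0 2 * hc10 + hαd20 - α * hd20 - c 0 2 ^ 2 * hαa
  have hc02 : c 0 2 = 0 := pow_eq_zero_iff two_ne_zero |>.1 <|
    (mul_eq_zero.1 hsq).resolve_left (pow_ne_zero 2 ha)
  exact hne (by rw [hc10, hc02, mul_zero])

end Coefficients

theorem commuting_automorphism_preserves_fibration_general
    (α β a b : ℂ) (hαa : α * a ≠ 0)
    (f : Fin 2 → P2) (hfdef : f = ![C α * X 0 + C β + X 1 ^ 2, C a * X 1 + C b])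
    (g : Fin 2 → P2)
    (hdeg : ∀ i, (g i).totalDegree ≤ 2)
    (hcomm : ∀ i, bind₁ f (g i) = bind₁ g (f i)) :
    (g 1).vars ⊆ {1} := by
  subst hfdef
  obtain ⟨h10, h20, h11⟩ := coeffs_eq_zero_of_commute_elementary (right_ne_zero_of_mul hαa)
    (c := fun i j => coeff (mon i j) (g 1)) (d := fun i j => coeff (mon i j) (g 0))
    (fun x y => by
      simpa [eval_bind₁, eval_eq_quadratic (hdeg _)] using congrArg (eval ![x, y]) (hcomm 1))
    (fun x y => by
      simpa [eval_bind₁, eval_eq_quadratic (hdeg _)] using congrArg (eval ![x, y]) (hcomm 0))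
  exact vars_subset_singleton_one_of_coeff_eq_zero (hdeg 1) h10 h20 h11

/-- Any quadratic polynomial automorphism `g` of `ℂ²` commuting with
the elementary automorphism `f = (αx₀ + β + x₁², ax₁ + b)`, where `αa ≠ 0`, preserves
the fibration `x₁ = const`: the second component of `g` depends only on `x₁`. -/
theorem commuting_automorphism_preserves_fibration
    (α β a b : ℂ) (hαa : α * a ≠ 0)
    (f : Fin 2 → P2) (hfdef : f = ![C α * X 0 + C β + X 1 ^ 2, C a * X 1 + C b])
    (g ginv : Fin 2 → P2) (hg : PolyAutPair g ginv)
    (hdeg : ∀ i, (g i).totalDegree ≤ 2)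
    (hcomm : ∀ i, bind₁ f (g i) = bind₁ g (f i)) :
    (g 1).vars ⊆ {1} :=
  commuting_automorphism_preserves_fibration_general α β a b hαa f hfdef g hdeg hcomm
end
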